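/- arXiv:1210.1021 — 2 statements merged into one kernel-verified Lean document; each statement's English description precedes it below -/
import Mathlib

section
/- The Kraus map Φ is trace-preserving: for every n̄ ∈ ℕ and θ₂ ∈ ℝ, the operators satisfy M_g† M_g + M_e† M_e + M_m† M_m = 1 (the identity matrix of size 4n̄+4); equivalently, for every n ∈ {0,…,4n̄+3}, cos⁴(β(n)/2)·sin²(α(n)) + (cos²(α(n)/2)·cos(β(n)) − sin²(α(n)/2))² + sin²(β(n))·cos²(α(n)/2) = 1. -/
open Matrix
open scoped ComplexOrder

noncomputable section

/-- α(n) = π·√((n+1)/(n̄+1)) -/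
def alphaAng (nbar n : ℕ) : ℝ := Real.pi * Real.sqrt (((n : ℝ) + 1) / ((nbar : ℝ) + 1))

/-- β(n) = θ₂·√n/2 -/
def betaAng (θ₂ : ℝ) (n : ℕ) : ℝ := θ₂ * Real.sqrt (n : ℝ) / 2

/-- generic two-step recursive sequence with initial values 0, 1 -/
def seq2 (step : ℕ → ℝ → ℝ → ℝ) : ℕ → ℝ
  | 0 => 0
  | 1 => 1
  | (j+2) => step j (seq2 step (j+1)) (seq2 step j)

def fLow (nbar : ℕ) (θ₂ η : ℝ) : ℕ → ℝ :=
  seq2 (fun j x y => x + η * (Real.sin (alphaAng nbar (nbar - (j+1)) / 2))^2 *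
    (Real.cos (betaAng θ₂ (nbar - (j+1)) / 2))^2 * (x - y))

def fHigh (nbar : ℕ) (θ₂ η : ℝ) : ℕ → ℝ :=
  seq2 (fun j x y => x + η * (Real.sin (betaAng θ₂ (nbar + (j+1)) / 2))^2 * (x - y))

def fLyap (nbar : ℕ) (θ₂ η : ℝ) (n : ℕ) : ℝ :=
  if n ≤ nbar then fLow nbar θ₂ η (nbar - n) else fHigh nbar θ₂ η (n - nbar)

def Mg (nbar : ℕ) (θ₂ : ℝ) : Matrix (Fin (4*nbar+4)) (Fin (4*nbar+4)) ℂ :=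
  fun i j => if (i : ℕ) = (j : ℕ) + 1
    then Complex.ofReal ((Real.cos (betaAng θ₂ (j : ℕ) / 2))^2 * Real.sin (alphaAng nbar (j : ℕ)))
    else 0

def Me (nbar : ℕ) (θ₂ : ℝ) : Matrix (Fin (4*nbar+4)) (Fin (4*nbar+4)) ℂ :=
  fun i j => if i = j
    then Complex.ofReal ((Real.cos (alphaAng nbar (j : ℕ) / 2))^2 * Real.cos (betaAng θ₂ (j : ℕ))
      - (Real.sin (alphaAng nbar (j : ℕ) / 2))^2)
    else 0

def Mm (nbar : ℕ) (θ₂ : ℝ) : Matrix (Fin (4*nbar+4)) (Fin (4*nbar+4)) ℂ :=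
  fun i j => if (i : ℕ) + 1 = (j : ℕ)
    then Complex.ofReal (Real.sin (betaAng θ₂ (j : ℕ)) * Real.cos (alphaAng nbar (j : ℕ) / 2))
    else 0

def PhiK (nbar : ℕ) (θ₂ : ℝ) (ρ : Matrix (Fin (4*nbar+4)) (Fin (4*nbar+4)) ℂ) :
    Matrix (Fin (4*nbar+4)) (Fin (4*nbar+4)) ℂ :=
  Mg nbar θ₂ * ρ * (Mg nbar θ₂)ᴴ + Me nbar θ₂ * ρ * (Me nbar θ₂)ᴴ + Mm nbar θ₂ * ρ * (Mm nbar θ₂)ᴴ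

/-- Hypothesis (H) -/
def HypH (nbar : ℕ) (θ₂ : ℝ) : Prop :=
  ∀ n k : ℕ, 1 ≤ n → n ≤ 4*nbar+3 → θ₂ ≠ (k : ℝ) * Real.pi / Real.sqrt (n : ℝ)

def dCoef (nbar : ℕ) (θ₂ : ℝ) (n : ℕ) : ℝ :=
  (Real.sin (betaAng θ₂ n))^2 * (Real.cos (alphaAng nbar n / 2))^2

def eCoef (nbar : ℕ) (θ₂ : ℝ) (n : ℕ) : ℝ :=
  (Real.sin (alphaAng nbar n))^2 * (Real.cos (betaAng θ₂ n / 2))^4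

def qCoef (nbar : ℕ) (θ₂ η : ℝ) (n : ℕ) : ℝ :=
  if n < nbar then
    (Real.sin (alphaAng nbar n))^2 * (Real.cos (betaAng θ₂ n / 2))^4 *
      (η * (Real.sin (betaAng θ₂ n / 2))^2 - 1) * (fLyap nbar θ₂ η n - fLyap nbar θ₂ η (n+1))
  else if n = nbar then 0
  else
    (Real.sin (betaAng θ₂ n))^2 * (Real.cos (alphaAng nbar n / 2))^2 *
      (η * (Real.sin (alphaAng nbar n / 2))^2 * (Real.cos (betaAng θ₂ n / 2))^2 - 1) *
      (fLyap nbar θ₂ η n - fLyap nbar θ₂ η (n-1))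

lemma scalar_id (a b : ℝ) :
    (Real.cos (b/2))^4 * (Real.sin a)^2
      + ((Real.cos (a/2))^2 * Real.cos b - (Real.sin (a/2))^2)^2
      + (Real.sin b)^2 * (Real.cos (a/2))^2 = 1 := by
  have ha : Real.sin a = 2 * Real.sin (a/2) * Real.cos (a/2) := by
    rw [← Real.sin_two_mul]; ring_nf
  have hb : Real.sin b = 2 * Real.sin (b/2) * Real.cos (b/2) := by
    rw [← Real.sin_two_mul]; ring_nf
  have hcb : Real.cos b = 2 * (Real.cos (b/2))^2 - 1 := by
    rw [← Real.cos_two_mul]; ring_nf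
  rw [ha, hb, hcb]
  set s := Real.sin (a/2)
  set c := Real.cos (a/2)
  set sb := Real.sin (b/2)
  set cb := Real.cos (b/2)
  have h1 : s^2 + c^2 = 1 := Real.sin_sq_add_cos_sq _
  have h2 : sb^2 + cb^2 = 1 := Real.sin_sq_add_cos_sq _
  linear_combination (4*cb^4*c^2 - (2*c^2*(2*cb^2-1) - s^2 - 1 + c^2)) * h1
    + 4*cb^2*c^2 * h2

lemma sum_ite_coe {N : ℕ} (m : ℕ) (c : ℂ) :
    (∑ k : Fin N, if (k : ℕ) = m then c else 0) = if m < N then c else 0 := by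
  by_cases h : m < N
  · rw [if_pos h]
    have e : ∀ k : Fin N, ((k : ℕ) = m) = (k = ⟨m, h⟩) := by
      intro k; simp [Fin.ext_iff]
    simp only [e]
    simp
  · rw [if_neg h]
    exact Finset.sum_eq_zero fun k _ => by rw [if_neg]; omega

lemma sum_ite_succ {N : ℕ} (m : ℕ) (c : ℂ) :
    (∑ k : Fin N, if (k : ℕ) + 1 = m then c else 0) = if 0 < m ∧ m ≤ N then c else 0 := by
  by_cases h : 0 < m ∧ m ≤ N
  · rw [if_pos h]
    have hm : m - 1 < N := by omega
    have e : ∀ k : Fin N, ((k : ℕ) + 1 = m) = (k = ⟨m - 1, hm⟩) := by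
      intro k; simp only [Fin.ext_iff]; simp only [eq_iff_iff]; omega
    simp only [e]
    simp
  · rw [if_neg h]
    exact Finset.sum_eq_zero fun k _ => by rw [if_neg]; omega

lemma alpha_top (nbar : ℕ) : Real.sin (alphaAng nbar (4*nbar+3)) = 0 := by
  have h : (((4*nbar+3 : ℕ) : ℝ) + 1) / ((nbar : ℝ) + 1) = 4 := by
    have hpos : ((nbar : ℝ) + 1) ≠ 0 := by positivity
    field_simp
    push_cast
    ring
  have hs : Real.sqrt (((4*nbar+3 : ℕ) : ℝ) + 1) = Real.sqrt _ := rfl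
  unfold alphaAng
  rw [h, show (4:ℝ) = 2^2 by norm_num, Real.sqrt_sq (by norm_num : (0:ℝ) ≤ 2)]
  rw [show Real.pi * 2 = 2 * Real.pi by ring]
  exact Real.sin_two_pi

lemma beta_zero (θ₂ : ℝ) : Real.sin (betaAng θ₂ 0) = 0 := by
  unfold betaAng
  simp

lemma gg_apply (nbar : ℕ) (θ₂ : ℝ) (i j : Fin (4*nbar+4)) :
    ((Mg nbar θ₂)ᴴ * Mg nbar θ₂) i j
      = if ((i:ℕ) = (j:ℕ) ∧ (i:ℕ)+1 < 4*nbar+4) then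
          Complex.ofReal (((Real.cos (betaAng θ₂ (i:ℕ) / 2))^2 * Real.sin (alphaAng nbar (i:ℕ)))^2)
        else 0 := by
  rw [Matrix.mul_apply]
  simp only [Matrix.conjTranspose_apply, Mg]
  rcases eq_or_ne (i:ℕ) (j:ℕ) with h | h
  · have tc : ∀ k : Fin (4*nbar+4),
        star (if (k : ℕ) = (i : ℕ) + 1 then
            (Complex.ofReal ((Real.cos (betaAng θ₂ (i:ℕ) / 2))^2 * Real.sin (alphaAng nbar (i:ℕ)))) else 0) *
          (if (k : ℕ) = (j : ℕ) + 1 then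
            (Complex.ofReal ((Real.cos (betaAng θ₂ (j:ℕ) / 2))^2 * Real.sin (alphaAng nbar (j:ℕ)))) else 0)
        = if (k : ℕ) = (i : ℕ) + 1 then
            Complex.ofReal (((Real.cos (betaAng θ₂ (i:ℕ) / 2))^2 * Real.sin (alphaAng nbar (i:ℕ)))^2)
          else 0 := by
      intro k
      rw [← h]
      split_ifs <;> simp [← Complex.ofReal_mul, sq]
    rw [Finset.sum_congr rfl (fun k _ => tc k), sum_ite_coe]
    simp [h]
  · rw [if_neg (by tauto)]
    exact Finset.sum_eq_zero fun k _ => by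
      split_ifs <;> simp_all

lemma ee_apply (nbar : ℕ) (θ₂ : ℝ) (i j : Fin (4*nbar+4)) :
    ((Me nbar θ₂)ᴴ * Me nbar θ₂) i j
      = if i = j then
          Complex.ofReal (((Real.cos (alphaAng nbar (i:ℕ) / 2))^2 * Real.cos (betaAng θ₂ (i:ℕ))
            - (Real.sin (alphaAng nbar (i:ℕ) / 2))^2)^2)
        else 0 := by
  rw [Matrix.mul_apply]
  simp only [Matrix.conjTranspose_apply, Me]
  rcases eq_or_ne i j with h | h
  · subst h
    have tc : ∀ k : Fin (4*nbar+4),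
        star (if k = i then
            (Complex.ofReal ((Real.cos (alphaAng nbar (i:ℕ) / 2))^2 * Real.cos (betaAng θ₂ (i:ℕ))
              - (Real.sin (alphaAng nbar (i:ℕ) / 2))^2)) else 0) *
          (if k = i then
            (Complex.ofReal ((Real.cos (alphaAng nbar (i:ℕ) / 2))^2 * Real.cos (betaAng θ₂ (i:ℕ))
              - (Real.sin (alphaAng nbar (i:ℕ) / 2))^2)) else 0)
        = if k = i then
            Complex.ofReal (((Real.cos (alphaAng nbar (i:ℕ) / 2))^2 * Real.cos (betaAng θ₂ (i:ℕ))
              - (Real.sin (alphaAng nbar (i:ℕ) / 2))^2)^2)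
          else 0 := by
      intro k
      split_ifs <;> simp [← Complex.ofReal_mul, sq] <;> push_cast <;> ring
    rw [Finset.sum_congr rfl (fun k _ => tc k)]
    simp
  · rw [if_neg h]
    exact Finset.sum_eq_zero fun k _ => by
      split_ifs <;> simp_all

lemma mm_apply (nbar : ℕ) (θ₂ : ℝ) (i j : Fin (4*nbar+4)) :
    ((Mm nbar θ₂)ᴴ * Mm nbar θ₂) i j
      = if ((i:ℕ) = (j:ℕ) ∧ 0 < (i:ℕ)) then
          Complex.ofReal ((Real.sin (betaAng θ₂ (i:ℕ)) * Real.cos (alphaAng nbar (i:ℕ) / 2))^2)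
        else 0 := by
  rw [Matrix.mul_apply]
  simp only [Matrix.conjTranspose_apply, Mm]
  rcases eq_or_ne (i:ℕ) (j:ℕ) with h | h
  · have tc : ∀ k : Fin (4*nbar+4),
        star (if (k : ℕ) + 1 = (i : ℕ) then
            (Complex.ofReal (Real.sin (betaAng θ₂ (i:ℕ)) * Real.cos (alphaAng nbar (i:ℕ) / 2))) else 0) *
          (if (k : ℕ) + 1 = (j : ℕ) then
            (Complex.ofReal (Real.sin (betaAng θ₂ (j:ℕ)) * Real.cos (alphaAng nbar (j:ℕ) / 2))) else 0)
        = if (k : ℕ) + 1 = (i : ℕ) then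
            Complex.ofReal ((Real.sin (betaAng θ₂ (i:ℕ)) * Real.cos (alphaAng nbar (i:ℕ) / 2))^2)
          else 0 := by
      intro k
      rw [← h]
      split_ifs <;> simp [← Complex.ofReal_mul, sq]
    rw [Finset.sum_congr rfl (fun k _ => tc k), sum_ite_succ]
    have hi : (i:ℕ) ≤ 4*nbar+4 := le_of_lt i.isLt
    by_cases hp : 0 < (i:ℕ) <;> simp [h, hp, hi]
  · rw [if_neg (by tauto)]
    exact Finset.sum_eq_zero fun k _ => by
      split_ifs <;> simp_all

/-- the Kraus map is trace-preserving: M_g†M_g + M_e†M_e + M_m†M_m = 1,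
and the equivalent scalar identity holds at every level n. -/
theorem trace_preserving (nbar : ℕ) (θ₂ : ℝ) :
    (Mg nbar θ₂)ᴴ * Mg nbar θ₂ + (Me nbar θ₂)ᴴ * Me nbar θ₂ + (Mm nbar θ₂)ᴴ * Mm nbar θ₂ = 1 ∧
    ∀ n : ℕ, n ≤ 4*nbar+3 →
      (Real.cos (betaAng θ₂ n / 2))^4 * (Real.sin (alphaAng nbar n))^2
        + ((Real.cos (alphaAng nbar n / 2))^2 * Real.cos (betaAng θ₂ n)
            - (Real.sin (alphaAng nbar n / 2))^2)^2
        + (Real.sin (betaAng θ₂ n))^2 * (Real.cos (alphaAng nbar n / 2))^2 = 1  := by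
  have hscal : ∀ n : ℕ,
      (Real.cos (betaAng θ₂ n / 2))^4 * (Real.sin (alphaAng nbar n))^2
        + ((Real.cos (alphaAng nbar n / 2))^2 * Real.cos (betaAng θ₂ n)
            - (Real.sin (alphaAng nbar n / 2))^2)^2
        + (Real.sin (betaAng θ₂ n))^2 * (Real.cos (alphaAng nbar n / 2))^2 = 1 :=
    fun n => scalar_id (alphaAng nbar n) (betaAng θ₂ n)
  refine ⟨?_, fun n _ => hscal n⟩
  ext i j
  rw [Matrix.add_apply, Matrix.add_apply, gg_apply, ee_apply, mm_apply, Matrix.one_apply]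
  rcases eq_or_ne i j with h | h
  · subst h
    rw [if_pos rfl, if_pos rfl]
    have hG : (if ((i:ℕ) = (i:ℕ) ∧ (i:ℕ)+1 < 4*nbar+4) then
          Complex.ofReal (((Real.cos (betaAng θ₂ (i:ℕ) / 2))^2 * Real.sin (alphaAng nbar (i:ℕ)))^2)
        else 0)
        = Complex.ofReal (((Real.cos (betaAng θ₂ (i:ℕ) / 2))^2 * Real.sin (alphaAng nbar (i:ℕ)))^2) := by
      by_cases hc : (i:ℕ)+1 < 4*nbar+4
      · rw [if_pos ⟨rfl, hc⟩]
      · have hi : (i:ℕ) = 4*nbar+3 := by have := i.isLt; omega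
        rw [if_neg (by tauto), hi, alpha_top]
        simp
    have hM : (if ((i:ℕ) = (i:ℕ) ∧ 0 < (i:ℕ)) then
          Complex.ofReal ((Real.sin (betaAng θ₂ (i:ℕ)) * Real.cos (alphaAng nbar (i:ℕ) / 2))^2)
        else 0)
        = Complex.ofReal ((Real.sin (betaAng θ₂ (i:ℕ)) * Real.cos (alphaAng nbar (i:ℕ) / 2))^2) := by
      by_cases hc : 0 < (i:ℕ)
      · rw [if_pos ⟨rfl, hc⟩]
      · have hi : (i:ℕ) = 0 := by omega
        rw [if_neg (by tauto), hi, beta_zero]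
        simp
    rw [hG, hM, ← Complex.ofReal_add, ← Complex.ofReal_add, ← Complex.ofReal_one]
    congr 1
    have := hscal (i:ℕ)
    nlinarith [this]
  · have h' : (i:ℕ) ≠ (j:ℕ) := fun hc => h (Fin.ext hc)
    rw [if_neg (by tauto), if_neg h, if_neg (by tauto), if_neg h]
    simp
end
end

section
/- For the resonant trapping-state reservoir on the (n̄+1)-dimensional truncation: for every density matrix ρ₀ ∈ Matrix (Fin (n̄+1)) (Fin (n̄+1)) ℂ, the iterates ρ_k = Φ_r^[k](ρ₀) converge entrywise, as k → ∞, to the projector |n̄⟩⟨n̄|. -/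
/-!
On the diagonal, `Φ_r` acts as a pure-birth chain: the population of level `n` keeps the fraction
`cos² α(n)` and passes `sin² α(n)` up to level `n + 1`, and `sin α(n̄) = 0` makes `n̄` absorbing.
Hence the total population of the levels `≤ n` is nonincreasing and drops by `sin² α(n) · p_n` at
every step; being bounded below it converges, so `p_n → 0` whenever `sin α(n) ≠ 0`, that is for
every `n < n̄`. Conservation of the trace moves all the population to `n̄`, and the off-diagonal
entries vanish in the limit because `|ρ_ab|² ≤ ρ_aa ρ_bb` for positive semidefinite `ρ`.
-/

open Matrix
open scoped ComplexOrder

noncomputable section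

/-- Kraus operator M_g^r of the resonant trapping-state reservoir on dimension D. -/
def Mgr (nbar D : ℕ) : Matrix (Fin D) (Fin D) ℂ :=
  fun i j => if (i : ℕ) = (j : ℕ) + 1
    then Complex.ofReal (Real.sin (alphaAng nbar (j : ℕ)))
    else 0

/-- Kraus operator M_e^r of the resonant trapping-state reservoir on dimension D. -/
def Mer (nbar D : ℕ) : Matrix (Fin D) (Fin D) ℂ :=
  fun i j => if i = j then Complex.ofReal (Real.cos (alphaAng nbar (j : ℕ))) else 0

/-- Kraus map of the resonant trapping-state reservoir on dimension D. -/
def PhirK (nbar D : ℕ) (ρ : Matrix (Fin D) (Fin D) ℂ) : Matrix (Fin D) (Fin D) ℂ :=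
  Mgr nbar D * ρ * (Mgr nbar D)ᴴ + Mer nbar D * ρ * (Mer nbar D)ᴴ

open Finset Filter Topology

open RCLike in
lemma Matrix.PosSemidef.norm_apply_sq_le {n 𝕜 : Type*} [Fintype n] [RCLike 𝕜]
    {A : Matrix n n 𝕜} (hA : A.PosSemidef) (i j : n) :
    ‖A i j‖ ^ 2 ≤ re (A i i) * re (A j j) := by
  have hdet := (hA.submatrix ![i, j]).det_nonneg
  rw [det_fin_two] at hdet
  simp only [submatrix_apply, cons_val_zero, cons_val_one] at hdet
  rw [← hA.1.apply j i, ← hA.1.coe_re_apply_self i, ← hA.1.coe_re_apply_self j,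
    RCLike.star_def, RCLike.mul_conj, sub_nonneg] at hdet
  exact_mod_cast hdet

lemma Matrix.tendsto_apply_zero_of_posSemidef {ι n 𝕜 : Type*} [Fintype n] [RCLike 𝕜]
    {l : Filter ι} {A : ι → Matrix n n 𝕜} (hA : ∀ k, (A k).PosSemidef) {i j : n}
    (h : Tendsto (fun k => RCLike.re (A k i i) * RCLike.re (A k j j)) l (𝓝 0)) :
    Tendsto (fun k => A k i j) l (𝓝 0) := by
  rw [tendsto_zero_iff_norm_tendsto_zero]
  refine squeeze_zero (fun _ => norm_nonneg _) (fun k => ?_) (by simpa using h.sqrt)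
  exact Real.le_sqrt_of_sq_le ((hA k).norm_apply_sq_le i j)

/-- One step of the pure-birth chain on `ℕ` in which level `n` passes the fraction `s n` of its
population on to level `n + 1`. -/
def birthStep (s p : ℕ → ℝ) : ℕ → ℝ
  | 0 => (1 - s 0) * p 0
  | n + 1 => (1 - s (n + 1)) * p (n + 1) + s n * p n

namespace birthStep

variable {s p : ℕ → ℝ}

lemma nonneg (hs₀ : 0 ≤ s) (hs₁ : s ≤ 1) (hp : 0 ≤ p) : 0 ≤ birthStep s p := by
  have hs : ∀ n, 0 ≤ 1 - s n := fun n => sub_nonneg.2 (hs₁ n)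
  rintro (_ | n)
  · exact mul_nonneg (hs 0) (hp 0)
  · exact add_nonneg (mul_nonneg (hs _) (hp _)) (mul_nonneg (hs₀ n) (hp n))

lemma iterate_nonneg (hs₀ : 0 ≤ s) (hs₁ : s ≤ 1) (hp : 0 ≤ p) (k : ℕ) :
    0 ≤ (birthStep s)^[k] p := by
  induction k with
  | zero => exact hp
  | succ k ih => rw [Function.iterate_succ_apply']; exact nonneg hs₀ hs₁ ih

lemma sum_range_succ_eq (s p : ℕ → ℝ) (n : ℕ) :
    ∑ j ∈ range (n + 1), birthStep s p j = ∑ j ∈ range (n + 1), p j - s n * p n := by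
  induction n with
  | zero => simp [birthStep]; ring
  | succ n ih => rw [sum_range_succ, ih, sum_range_succ _ (n + 1), birthStep]; ring

lemma sum_range_succ_iterate_eq {n : ℕ} (hn : s n = 0) (k : ℕ) :
    ∑ j ∈ range (n + 1), (birthStep s)^[k] p j = ∑ j ∈ range (n + 1), p j := by
  induction k with
  | zero => rfl
  | succ k ih => rw [Function.iterate_succ_apply', sum_range_succ_eq, hn, zero_mul, sub_zero, ih]

theorem tendsto_iterate_zero (hs₀ : 0 ≤ s) (hs₁ : s ≤ 1) (hp : 0 ≤ p) {n : ℕ} (hn : 0 < s n) :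
    Tendsto (fun k => (birthStep s)^[k] p n) atTop (𝓝 0) := by
  set P : ℕ → ℕ → ℝ := fun k => (birthStep s)^[k] p
  have hP : ∀ k, 0 ≤ P k := iterate_nonneg hs₀ hs₁ hp
  set S : ℕ → ℝ := fun k => ∑ j ∈ range (n + 1), P k j
  have hS : ∀ k, S (k + 1) = S k - s n * P k n := fun k => by
    simp only [S, P, Function.iterate_succ_apply', sum_range_succ_eq]
  have hanti : Antitone S := antitone_nat_of_succ_le fun k => by
    rw [hS]; exact sub_le_self _ (mul_nonneg hn.le (hP k n))
  have hbdd : BddBelow (Set.range S) :=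
    ⟨0, by rintro _ ⟨k, rfl⟩; exact sum_nonneg fun j _ => hP k j⟩
  have hlim := tendsto_atTop_ciInf hanti hbdd
  have hleak : Tendsto (fun k => s n * P k n) atTop (𝓝 0) := by
    have hdiff := hlim.sub (hlim.comp (tendsto_add_atTop_nat 1))
    rw [sub_self] at hdiff
    refine hdiff.congr fun k => ?_
    simp only [Function.comp_apply, hS]
    ring
  simpa [hn.ne'] using hleak.const_mul (s n)⁻¹

end birthStep

lemma alphaAng_self (nbar : ℕ) : alphaAng nbar nbar = Real.pi := by
  rw [alphaAng, div_self (by positivity), Real.sqrt_one, mul_one]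

lemma sin_alphaAng_pos {nbar n : ℕ} (h : n < nbar) : 0 < Real.sin (alphaAng nbar n) := by
  have hratio : ((n : ℝ) + 1) / ((nbar : ℝ) + 1) < 1 := by
    rw [div_lt_one (by positivity)]
    exact_mod_cast Nat.succ_lt_succ h
  apply Real.sin_pos_of_pos_of_lt_pi
  · unfold alphaAng
    positivity
  · calc alphaAng nbar n < Real.pi * 1 := by
          unfold alphaAng
          gcongr
          rwa [Real.sqrt_lt' one_pos, one_pow]
      _ = Real.pi := mul_one _

lemma Mer_eq_diagonal (nbar D : ℕ) :
    Mer nbar D = diagonal fun j : Fin D => (Real.cos (alphaAng nbar j) : ℂ) := by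
  ext i j
  by_cases h : i = j <;> simp [Mer, h, -Complex.ofReal_cos]

lemma Mer_mul_mul_conjTranspose_apply_self {nbar D : ℕ} (ρ : Matrix (Fin D) (Fin D) ℂ)
    (i : Fin D) :
    (Mer nbar D * ρ * (Mer nbar D)ᴴ) i i = (Real.cos (alphaAng nbar i) ^ 2 : ℝ) * ρ i i := by
  rw [Mer_eq_diagonal, diagonal_conjTranspose, mul_diagonal, diagonal_mul]
  simp only [Pi.star_apply, Complex.star_def, Complex.conj_ofReal]
  push_cast
  ring

lemma Mgr_apply_zero {nbar D : ℕ} (l : Fin (D + 1)) : Mgr nbar (D + 1) 0 l = 0 := by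
  simp [Mgr]

lemma Mgr_apply_succ {nbar D j : ℕ} (h : j + 1 < D) (l : Fin D) :
    Mgr nbar D ⟨j + 1, h⟩ l =
      (Pi.single (⟨j, by omega⟩ : Fin D) (Real.sin (alphaAng nbar j) : ℂ) : Fin D → ℂ) l := by
  simp only [Mgr, Pi.single_apply, Fin.ext_iff]
  split_ifs <;> simp_all

lemma Mgr_mul_mul_conjTranspose_apply_zero {nbar D : ℕ}
    (ρ : Matrix (Fin (D + 1)) (Fin (D + 1)) ℂ) :
    (Mgr nbar (D + 1) * ρ * (Mgr nbar (D + 1))ᴴ) 0 0 = 0 := by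
  simp [mul_apply, Mgr_apply_zero]

lemma Mgr_mul_mul_conjTranspose_apply_succ {nbar D j : ℕ} (ρ : Matrix (Fin D) (Fin D) ℂ)
    (h : j + 1 < D) :
    (Mgr nbar D * ρ * (Mgr nbar D)ᴴ) ⟨j + 1, h⟩ ⟨j + 1, h⟩ =
      (Real.sin (alphaAng nbar j) ^ 2 : ℝ) * ρ ⟨j, by omega⟩ ⟨j, by omega⟩ := by
  simp only [mul_apply, conjTranspose_apply, Mgr_apply_succ, Pi.single_apply, ite_mul, zero_mul,
    sum_ite_eq', mem_univ, if_true, apply_ite star, star_zero, mul_ite, mul_zero,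
    Complex.star_def, Complex.conj_ofReal]
  push_cast
  ring

lemma PhirK_posSemidef {nbar D : ℕ} {ρ : Matrix (Fin D) (Fin D) ℂ} (hρ : ρ.PosSemidef) :
    (PhirK nbar D ρ).PosSemidef :=
  (hρ.mul_mul_conjTranspose_same _).add (hρ.mul_mul_conjTranspose_same _)

lemma PhirK_iterate_posSemidef {nbar D : ℕ} {ρ : Matrix (Fin D) (Fin D) ℂ} (hρ : ρ.PosSemidef)
    (k : ℕ) : ((PhirK nbar D)^[k] ρ).PosSemidef := by
  induction k with
  | zero => exact hρ
  | succ k ih => rw [Function.iterate_succ_apply']; exact PhirK_posSemidef ih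

def population {D : ℕ} (ρ : Matrix (Fin D) (Fin D) ℂ) (n : ℕ) : ℝ :=
  if h : n < D then (ρ ⟨n, h⟩ ⟨n, h⟩).re else 0

lemma population_coe {D : ℕ} (ρ : Matrix (Fin D) (Fin D) ℂ) (i : Fin D) :
    population ρ i = (ρ i i).re := by
  simp [population]

lemma population_nonneg {D : ℕ} {ρ : Matrix (Fin D) (Fin D) ℂ} (hρ : ρ.PosSemidef) :
    0 ≤ population ρ := fun n => by
  unfold population
  split_ifs
  · exact (Complex.nonneg_iff.mp hρ.diag_nonneg).1
  · exact le_rfl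

lemma sum_range_population {D : ℕ} (ρ : Matrix (Fin D) (Fin D) ℂ) :
    ∑ n ∈ range D, population ρ n = ρ.trace.re := by
  rw [← Fin.sum_univ_eq_sum_range, trace, Complex.re_sum]
  simp only [population_coe, diag_apply]

lemma population_PhirK {nbar : ℕ} (ρ : Matrix (Fin (nbar + 1)) (Fin (nbar + 1)) ℂ) :
    population (PhirK nbar (nbar + 1) ρ) =
      birthStep (fun n => Real.sin (alphaAng nbar n) ^ 2) (population ρ) := by
  funext n
  rcases n with _ | n
  · simp only [population, PhirK, Matrix.add_apply, Nat.zero_lt_succ, dif_pos, Fin.zero_eta,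
      Mgr_mul_mul_conjTranspose_apply_zero, Mer_mul_mul_conjTranspose_apply_self, Fin.val_zero,
      birthStep]
    rw [zero_add, Complex.re_ofReal_mul, Real.cos_sq']
  by_cases h : n + 1 < nbar + 1
  · simp only [population, dif_pos h, dif_pos (show n < nbar + 1 by omega), PhirK,
      Matrix.add_apply, Mgr_mul_mul_conjTranspose_apply_succ, Mer_mul_mul_conjTranspose_apply_self,
      birthStep, Complex.add_re, Complex.re_ofReal_mul, Real.cos_sq']
    ring
  have hρ : population ρ (n + 1) = 0 := dif_neg h
  have hΦ : population (PhirK nbar (nbar + 1) ρ) (n + 1) = 0 := dif_neg h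
  rcases (show nbar ≤ n by omega).eq_or_lt with rfl | hn
  · simp [hρ, hΦ, birthStep, alphaAng_self]
  · rw [hΦ, birthStep, hρ, show population ρ n = 0 from dif_neg (by omega)]
    ring

lemma population_iterate_PhirK {nbar : ℕ} (ρ : Matrix (Fin (nbar + 1)) (Fin (nbar + 1)) ℂ)
    (k : ℕ) : population ((PhirK nbar (nbar + 1))^[k] ρ) =
      (birthStep fun n => Real.sin (alphaAng nbar n) ^ 2)^[k] (population ρ) :=
  Function.Semiconj.iterate_right population_PhirK k ρ

theorem tendsto_population_iterate_PhirK_of_lt {nbar n : ℕ}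
    {ρ : Matrix (Fin (nbar + 1)) (Fin (nbar + 1)) ℂ} (hρ : ρ.PosSemidef) (hn : n < nbar) :
    Tendsto (fun k => population ((PhirK nbar (nbar + 1))^[k] ρ) n) atTop (𝓝 0) := by
  simp_rw [population_iterate_PhirK]
  exact birthStep.tendsto_iterate_zero (fun _ => sq_nonneg _) (fun _ => Real.sin_sq_le_one _)
    (population_nonneg hρ) (pow_pos (sin_alphaAng_pos hn) 2)

theorem tendsto_population_iterate_PhirK_self {nbar : ℕ}
    {ρ : Matrix (Fin (nbar + 1)) (Fin (nbar + 1)) ℂ} (hρ : ρ.PosSemidef) (htr : ρ.trace = 1) :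
    Tendsto (fun k => population ((PhirK nbar (nbar + 1))^[k] ρ) nbar) atTop (𝓝 1) := by
  have hmass (k : ℕ) :
      ∑ n ∈ range (nbar + 1), population ((PhirK nbar (nbar + 1))^[k] ρ) n = 1 := by
    rw [population_iterate_PhirK, birthStep.sum_range_succ_iterate_eq (by simp [alphaAng_self]),
      sum_range_population, htr, Complex.one_re]
  have hbelow : Tendsto (fun k => ∑ n ∈ range nbar, population ((PhirK nbar (nbar + 1))^[k] ρ) n)
      atTop (𝓝 0) := by
    simpa using tendsto_finsetSum (range nbar) fun n hn =>
      tendsto_population_iterate_PhirK_of_lt hρ (mem_range.mp hn)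
  have hlim := hbelow.const_sub 1
  rw [sub_zero] at hlim
  refine hlim.congr fun k => ?_
  rw [← hmass k, sum_range_succ]
  ring

/-- on the (n̄+1)-dimensional truncation, the resonant trapping-state
reservoir drives every density matrix entrywise to |n̄⟩⟨n̄|. -/
theorem trapping_state_convergence_below (nbar : ℕ)
    (ρ₀ : Matrix (Fin (nbar+1)) (Fin (nbar+1)) ℂ)
    (hpsd : ρ₀.PosSemidef) (htr : ρ₀.trace = 1) :
    ∀ a b : Fin (nbar+1),
      Filter.Tendsto (fun k => (PhirK nbar (nbar+1))^[k] ρ₀ a b) Filter.atTop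
        (nhds (Matrix.single (⟨nbar, by omega⟩ : Fin (nbar+1))
          (⟨nbar, by omega⟩ : Fin (nbar+1)) 1 a b)) := by
  intro a b
  set ρ : ℕ → Matrix (Fin (nbar + 1)) (Fin (nbar + 1)) ℂ := fun k => (PhirK nbar (nbar + 1))^[k] ρ₀
  have hρ : ∀ k, (ρ k).PosSemidef := PhirK_iterate_posSemidef hpsd
  have hpop (i : Fin (nbar + 1)) :
      Tendsto (fun k => (ρ k i i).re) atTop (𝓝 (if (i : ℕ) = nbar then 1 else 0)) := by
    simp_rw [← population_coe]
    split_ifs with hi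
    · rw [hi]
      exact tendsto_population_iterate_PhirK_self hpsd htr
    · exact tendsto_population_iterate_PhirK_of_lt hpsd (by omega)
  rcases eq_or_ne a b with rfl | hab
  · convert (Complex.continuous_ofReal.tendsto _).comp (hpop a) using 1
    · funext k
      exact ((hρ k).1.coe_re_apply_self a).symm
    · simp only [single_apply, Fin.ext_iff, and_self, eq_comm]
      split_ifs <;> simp
  · have hab' : (a : ℕ) ≠ b := Fin.val_ne_of_ne hab
    have hprod : Tendsto (fun k => (ρ k a a).re * (ρ k b b).re) atTop (𝓝 0) := by
      convert (hpop a).mul (hpop b) using 2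
      split_ifs <;> simp_all
    convert tendsto_apply_zero_of_posSemidef hρ hprod using 2
    simp only [single_apply, Fin.ext_iff]
    exact if_neg (by omega)
end
end
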